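/- Let S(p_s, r_s) be a solid sphere and C(p_c, r_c, l_c) a solid cylinder in ℝ³ with X = (p_s − p_c)·l_c/‖l_c‖. If |X| > ‖l_c‖ + r_s, then S and C intersect (have a common point) if and only if the cylinder is entirely contained in the sphere, which happens if and only if ‖p_c − p_s‖ + √(‖l_c‖² + r_c²) ≤ r_s; in particular if |X| > ‖l_c‖ + r_s then S ∩ C = ∅. -/

import Mathlib

open scoped RealInnerProductSpace
noncomputable section

/-- ℝ³ as a Euclidean space. -/
abbrev E3 := EuclideanSpace ℝ (Fin 3)

/-- Cross product in ℝ³. -/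
def cross3 (a b : E3) : E3 :=
  WithLp.toLp 2 ![a 1 * b 2 - a 2 * b 1, a 2 * b 0 - a 0 * b 2, a 0 * b 1 - a 1 * b 0]

/-- The line through `p` with direction `d`. -/
def lineThrough (p d : E3) : Set E3 := {x | ∃ t : ℝ, x = p + t • d}

/-- Solid sphere with center `p` and radius `r`. -/
def sphereS (p : E3) (r : ℝ) : Set E3 := Metric.closedBall p r

/-- Solid finite cylinder with center `p`, radius `r` and half-axis vector `l`. -/
def cylS (p : E3) (r : ℝ) (l : E3) : Set E3 :=
  {x | |⟪x - p, l⟫| ≤ ‖l‖ ^ 2 ∧ Metric.infDist x (lineThrough p l) ≤ r}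

/-!
Every point of the cylinder lies in the slab `|⟪x - p_c, l_c⟫| ≤ ‖l_c‖²`, and every point of the
ball has axial coordinate within `r_s` of that of `p_s`. So a common point forces
`|X| ≤ ‖l_c‖ + r_s`, and under the hypothesis the solids are disjoint. As the cylinder contains
its center `p_c`, which then lies outside the ball, every statement in the two equivalences is false.
-/

lemma abs_inner_div_norm_le_of_mem_closedBall {F : Type*} [NormedAddCommGroup F]
    [InnerProductSpace ℝ F] {x p q l : F} {r : ℝ} (hx : x ∈ Metric.closedBall p r)
    (hslab : |⟪x - q, l⟫| ≤ ‖l‖ ^ 2) :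
    |⟪p - q, l⟫ / ‖l‖| ≤ ‖l‖ + r := by
  have hxp : ‖p - x‖ ≤ r := by rwa [Metric.mem_closedBall', dist_eq_norm] at hx
  have hr : 0 ≤ r := (norm_nonneg _).trans hxp
  have hsplit : ⟪p - q, l⟫ = ⟪p - x, l⟫ + ⟪x - q, l⟫ := by
    rw [← inner_add_left, sub_add_sub_cancel]
  rw [abs_div, abs_norm]
  refine div_le_of_le_mul₀ (norm_nonneg _) (by positivity) ?_
  calc |⟪p - q, l⟫| ≤ |⟪p - x, l⟫| + |⟪x - q, l⟫| := hsplit ▸ abs_add_le _ _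
    _ ≤ ‖p - x‖ * ‖l‖ + ‖l‖ ^ 2 := add_le_add (abs_real_inner_le_norm _ _) hslab
    _ ≤ r * ‖l‖ + ‖l‖ ^ 2 := by gcongr
    _ = (‖l‖ + r) * ‖l‖ := by ring

lemma sphereS_inter_cylS_eq_empty {p_s p_c l_c : E3} {r_s r_c : ℝ}
    (hX : ‖l_c‖ + r_s < |⟪p_s - p_c, l_c⟫ / ‖l_c‖|) :
    sphereS p_s r_s ∩ cylS p_c r_c l_c = ∅ := by
  refine Set.eq_empty_of_forall_notMem fun x ⟨hxs, hxc⟩ => hX.not_ge ?_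
  exact abs_inner_div_norm_le_of_mem_closedBall hxs hxc.1

lemma center_mem_cylS (p l : E3) {r : ℝ} (hr : 0 ≤ r) : p ∈ cylS p r l := by
  have hp : p ∈ lineThrough p l := ⟨0, by simp⟩
  exact ⟨by simp, by rwa [Metric.infDist_zero_of_mem hp]⟩

theorem sphere_cylinder_far_axial_general
    (p_s p_c l_c : E3) (r_s r_c : ℝ) (hrc : 0 < r_c)
    (hX : |⟪p_s - p_c, l_c⟫ / ‖l_c‖| > ‖l_c‖ + r_s) :
    ((sphereS p_s r_s ∩ cylS p_c r_c l_c).Nonempty ↔ cylS p_c r_c l_c ⊆ sphereS p_s r_s) ∧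
    (cylS p_c r_c l_c ⊆ sphereS p_s r_s ↔
      ‖p_c - p_s‖ + Real.sqrt (‖l_c‖ ^ 2 + r_c ^ 2) ≤ r_s) ∧
    sphereS p_s r_s ∩ cylS p_c r_c l_c = ∅ := by
  have hdisj := sphereS_inter_cylS_eq_empty (r_c := r_c) hX
  have hpc := center_mem_cylS p_c l_c hrc.le
  have hpc_notMem : p_c ∉ sphereS p_s r_s := fun h =>
    Set.eq_empty_iff_forall_notMem.mp hdisj p_c ⟨h, hpc⟩
  refine ⟨iff_of_false (Set.not_nonempty_iff_eq_empty.mpr hdisj) fun h => hpc_notMem (h hpc),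
    iff_of_false (fun h => hpc_notMem (h hpc)) fun h => hpc_notMem ?_, hdisj⟩
  rw [sphereS, Metric.mem_closedBall, dist_eq_norm]
  linarith [Real.sqrt_nonneg (‖l_c‖ ^ 2 + r_c ^ 2)]

/-- If the sphere center is axially far from the cylinder, the only possible intersection
is total containment of the cylinder in the sphere; in particular they are disjoint. -/
theorem sphere_cylinder_far_axial
    (p_s p_c l_c : E3) (r_s r_c : ℝ) (hl : l_c ≠ 0) (hrs : 0 < r_s) (hrc : 0 < r_c)
    (hX : |⟪p_s - p_c, l_c⟫ / ‖l_c‖| > ‖l_c‖ + r_s) :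
    ((sphereS p_s r_s ∩ cylS p_c r_c l_c).Nonempty ↔ cylS p_c r_c l_c ⊆ sphereS p_s r_s) ∧
    (cylS p_c r_c l_c ⊆ sphereS p_s r_s ↔
      ‖p_c - p_s‖ + Real.sqrt (‖l_c‖ ^ 2 + r_c ^ 2) ≤ r_s) ∧
    sphereS p_s r_s ∩ cylS p_c r_c l_c = ∅ :=
  sphere_cylinder_far_axial_general p_s p_c l_c r_s r_c hrc hX
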